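/- Define the Hermitian 8×8 matrices Hⱼ = [[0, Qⱼ],[Qⱼ*, 0]] for j = 1,2,3,4 (with Q₁,…,Q₄ the explicit quaternionic unit matrices of the previous construction) and H₅ = [[I₄, 0],[0, −I₄]]. Then every nonzero real linear combination c₁H₁ + ⋯ + c₅H₅ is a Hermitian matrix with exactly 4 positive and 4 negative eigenvalues. -/

import Mathlib

open Matrix Complex

noncomputable def Q1 : Matrix (Fin 4) (Fin 4) ℂ :=
  !![0, 0, 1, 0; 0, 0, 0, 1; -1, 0, 0, 0; 0, -1, 0, 0]

noncomputable def Q2 : Matrix (Fin 4) (Fin 4) ℂ :=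
  !![0, 0, I, 0; 0, 0, 0, -I; I, 0, 0, 0; 0, -I, 0, 0]

noncomputable def Q3 : Matrix (Fin 4) (Fin 4) ℂ :=
  !![0, 0, 0, 1; 0, 0, -1, 0; 0, 1, 0, 0; -1, 0, 0, 0]

noncomputable def Q4 : Matrix (Fin 4) (Fin 4) ℂ :=
  !![0, 0, 0, I; 0, 0, I, 0; 0, I, 0, 0; I, 0, 0, 0]

noncomputable def Hmat : Fin 5 → Matrix (Fin 4 ⊕ Fin 4) (Fin 4 ⊕ Fin 4) ℂ :=
  ![Matrix.fromBlocks 0 Q1 Q1ᴴ 0,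
    Matrix.fromBlocks 0 Q2 Q2ᴴ 0,
    Matrix.fromBlocks 0 Q3 Q3ᴴ 0,
    Matrix.fromBlocks 0 Q4 Q4ᴴ 0,
    Matrix.fromBlocks 1 0 0 (-1)]

/-!
In 4×4 blocks, `∑ cⱼ Hⱼ = [[c₅ I, Q], [Qᴴ, -c₅ I]]` with `Q = c₁Q₁ + ⋯ + c₄Q₄`, and the quaternion
relations give `Q Qᴴ = Qᴴ Q = (c₁² + ⋯ + c₄²) I`. Hence `(∑ cⱼ Hⱼ)² = (∑ cⱼ²) I`, so every eigenvalue
of this Hermitian matrix is `±r` with `r = √(∑ cⱼ²) > 0`; as its trace vanishes, both signs occur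
equally often, i.e. four times each.
-/

open Finset

namespace Matrix

section Block

variable {m n R : Type*} [Fintype m] [Fintype n] [CommRing R]

theorem trace_fromBlocks (A : Matrix m m R) (B : Matrix m n R) (C : Matrix n m R)
    (D : Matrix n n R) : (fromBlocks A B C D).trace = A.trace + D.trace := by
  simp [trace, Fintype.sum_sum_type]

variable [DecidableEq m] [DecidableEq n]

theorem fromBlocks_mul_self_eq_smul_one (a q : R) {B : Matrix m n R} {C : Matrix n m R}
    (hBC : B * C = q • 1) (hCB : C * B = q • 1) :
    fromBlocks (a • 1) B C (-(a • 1)) * fromBlocks (a • 1) B C (-(a • 1)) = (a ^ 2 + q) • 1 := by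
  rw [fromBlocks_multiply, ← fromBlocks_one, fromBlocks_smul, smul_zero, hBC, hCB]
  congr 1 <;> simp [smul_smul, add_smul, sq, add_comm]

end Block

theorem IsHermitian.eigenvalues_sq_of_mul_self_eq_smul_one {n 𝕜 : Type*} [Fintype n]
    [DecidableEq n] [RCLike 𝕜] {A : Matrix n n 𝕜} (hA : A.IsHermitian) {s : ℝ}
    (hs : A * A = (s : 𝕜) • 1) (i : n) : hA.eigenvalues i ^ 2 = s := by
  have hv : ⇑(hA.eigenvectorBasis i) ≠ 0 :=
    (WithLp.ofLp_eq_zero 2).ne.2 (hA.eigenvectorBasis.orthonormal.ne_zero i)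
  have h : ((hA.eigenvalues i ^ 2 : ℝ) : 𝕜) • ⇑(hA.eigenvectorBasis i) =
      (s : 𝕜) • ⇑(hA.eigenvectorBasis i) := by
    calc _ = A *ᵥ (A *ᵥ ⇑(hA.eigenvectorBasis i)) := by
          rw [hA.mulVec_eigenvectorBasis, mulVec_smul, hA.mulVec_eigenvectorBasis, smul_smul,
            RCLike.real_smul_eq_coe_smul (K := 𝕜), sq, RCLike.ofReal_mul]
      _ = _ := by rw [mulVec_mulVec, hs, smul_mulVec, one_mulVec]
  exact_mod_cast smul_left_injective 𝕜 hv h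

end Matrix

namespace Finset

theorem card_filter_pos_eq_card_filter_neg {ι : Type*} [Fintype ι] {f : ι → ℝ} {r : ℝ}
    (hr : 0 < r) (hf : ∀ i, |f i| = r) (hsum : ∑ i, f i = 0) :
    #{i | 0 < f i} = #{i | f i < 0} := by
  have hpt : ∀ i, f i = r * ((if 0 < f i then 1 else 0) - (if f i < 0 then 1 else 0)) := by
    intro i
    rcases abs_eq hr.le |>.1 (hf i) with h | h <;> simp [h, hr, not_lt.2 hr.le]
  have : r * ((#{i | 0 < f i} : ℝ) - #{i | f i < 0}) = 0 :=
    calc _ = ∑ i, r * ((if 0 < f i then 1 else 0) - (if f i < 0 then 1 else 0)) := by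
          rw [← mul_sum, sum_sub_distrib, sum_boole, sum_boole]
      _ = ∑ i, f i := sum_congr rfl fun i _ => (hpt i).symm
      _ = 0 := hsum
  exact_mod_cast sub_eq_zero.1 ((mul_eq_zero.1 this).resolve_left hr.ne')

theorem card_filter_pos_add_card_filter_neg {ι : Type*} [Fintype ι] {f : ι → ℝ}
    (hf : ∀ i, f i ≠ 0) : #{i | 0 < f i} + #{i | f i < 0} = Fintype.card ι := by
  have hneg : ∀ i ∈ univ, f i < 0 ↔ ¬0 < f i := fun i _ => by
    rw [not_lt]; exact ⟨le_of_lt, fun h => lt_of_le_of_ne h (hf i)⟩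
  rw [filter_congr hneg, ← card_univ]
  exact card_filter_add_card_filter_not _

end Finset

theorem Q1_conjTranspose : Q1ᴴ = -Q1 := by
  ext i j; fin_cases i <;> fin_cases j <;> simp [Q1]

theorem Q2_conjTranspose : Q2ᴴ = -Q2 := by
  ext i j; fin_cases i <;> fin_cases j <;> simp [Q2]

theorem Q3_conjTranspose : Q3ᴴ = -Q3 := by
  ext i j; fin_cases i <;> fin_cases j <;> simp [Q3]

theorem Q4_conjTranspose : Q4ᴴ = -Q4 := by
  ext i j; fin_cases i <;> fin_cases j <;> simp [Q4]

noncomputable def Qsum (a b d e : ℝ) : Matrix (Fin 4) (Fin 4) ℂ :=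
  (a : ℂ) • Q1 + (b : ℂ) • Q2 + (d : ℂ) • Q3 + (e : ℂ) • Q4

theorem Qsum_conjTranspose (a b d e : ℝ) : (Qsum a b d e)ᴴ = -Qsum a b d e := by
  simp only [Qsum, conjTranspose_add, conjTranspose_smul, Q1_conjTranspose, Q2_conjTranspose,
    Q3_conjTranspose, Q4_conjTranspose, star_def, conj_ofReal, smul_neg]
  abel

theorem Qsum_mul_self (a b d e : ℝ) :
    Qsum a b d e * Qsum a b d e = (-(a ^ 2 + b ^ 2 + d ^ 2 + e ^ 2 : ℝ) : ℂ) • 1 := by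
  ext i j
  fin_cases i <;> fin_cases j <;>
    simp [Qsum, Q1, Q2, Q3, Q4, mul_apply, Fin.sum_univ_succ, one_apply] <;>
    ring_nf <;> simp [I_sq] <;> ring

theorem sum_smul_Hmat_eq_fromBlocks (c : Fin 5 → ℝ) :
    ∑ j, (c j : ℂ) • Hmat j =
      fromBlocks ((c 4 : ℂ) • 1) (Qsum (c 0) (c 1) (c 2) (c 3))
        (Qsum (c 0) (c 1) (c 2) (c 3))ᴴ (-((c 4 : ℂ) • 1)) := by
  rw [Qsum_conjTranspose]
  simp only [Fin.sum_univ_five, Hmat, Qsum, Q1_conjTranspose, Q2_conjTranspose, Q3_conjTranspose,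
    Q4_conjTranspose, cons_val_zero, cons_val_one, Matrix.cons_val, Complex.coe_smul,
    fromBlocks_smul, fromBlocks_add, smul_zero, smul_neg, add_zero, zero_add, fromBlocks_inj,
    and_true, true_and]
  abel

theorem sum_smul_Hmat_mul_self (c : Fin 5 → ℝ) :
    (∑ j, (c j : ℂ) • Hmat j) * ∑ j, (c j : ℂ) • Hmat j = ((∑ j, c j ^ 2 : ℝ) : ℂ) • 1 := by
  have hQ := Qsum_mul_self (c 0) (c 1) (c 2) (c 3)
  rw [sum_smul_Hmat_eq_fromBlocks, Qsum_conjTranspose,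
    fromBlocks_mul_self_eq_smul_one _ (((c 0) ^ 2 + (c 1) ^ 2 + (c 2) ^ 2 + (c 3) ^ 2 : ℝ) : ℂ)]
  · rw [Fin.sum_univ_five]; push_cast; congr 1; ring
  · rw [mul_neg, hQ, neg_smul, neg_neg]
  · rw [neg_mul, hQ, neg_smul, neg_neg]

theorem isHermitian_sum_smul_Hmat (c : Fin 5 → ℝ) : (∑ j, (c j : ℂ) • Hmat j).IsHermitian := by
  rw [sum_smul_Hmat_eq_fromBlocks]
  refine IsHermitian.fromBlocks ?_ rfl ?_ <;> simp [IsHermitian, conjTranspose_smul]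

theorem trace_sum_smul_Hmat (c : Fin 5 → ℝ) : (∑ j, (c j : ℂ) • Hmat j).trace = 0 := by
  rw [sum_smul_Hmat_eq_fromBlocks, trace_fromBlocks]
  simp

/-- Every nonzero real linear combination of the Hermitian `8×8` matrices
`H₁,…,H₅` has exactly 4 positive and 4 negative eigenvalues. -/
theorem stmt11 (c : Fin 5 → ℝ) (hc : c ≠ 0)
    (M : Matrix (Fin 4 ⊕ Fin 4) (Fin 4 ⊕ Fin 4) ℂ)
    (hM : M = ∑ j, (c j : ℂ) • Hmat j) :
    ∃ hHerm : M.IsHermitian,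
      (Finset.univ.filter fun i => 0 < hHerm.eigenvalues i).card = 4 ∧
      (Finset.univ.filter fun i => hHerm.eigenvalues i < 0).card = 4 := by
  subst hM
  have hr : 0 < √(∑ j, c j ^ 2) := by
    refine Real.sqrt_pos.2 <| (sum_nonneg fun j _ => sq_nonneg (c j)).lt_of_ne' fun h => ?_
    simp only [sq, sum_mul_self_eq_zero_iff, mem_univ, true_implies] at h
    exact hc (funext h)
  have hHerm := isHermitian_sum_smul_Hmat c
  refine ⟨hHerm, ?_⟩
  have habs (i) : |hHerm.eigenvalues i| = √(∑ j, c j ^ 2) := by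
    -- `s` is given explicitly: unifying `Complex.ofReal` with `RCLike.ofReal` would unfold the sum
    rw [← Real.sqrt_sq_eq_abs,
      hHerm.eigenvalues_sq_of_mul_self_eq_smul_one (s := ∑ j, c j ^ 2) (sum_smul_Hmat_mul_self c)]
  have hsum : ∑ i, hHerm.eigenvalues i = 0 := by
    have h := hHerm.trace_eq_sum_eigenvalues.symm.trans (trace_sum_smul_Hmat c)
    rwa [← RCLike.ofReal_sum, RCLike.ofReal_eq_zero] at h
  have hbal := card_filter_pos_eq_card_filter_neg hr habs hsum
  have htotal := card_filter_pos_add_card_filter_neg fun i =>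
    abs_ne_zero.1 ((habs i).trans_ne hr.ne')
  simp only [Fintype.card_sum, Fintype.card_fin] at htotal
  omega
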